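/- arXiv:1311.4241 — 2 statements merged into one kernel-verified Lean document; each statement's English description precedes it below -/
import Mathlib

section
/- Let H = H₁ ⊕ ⋯ ⊕ H_p be block-diagonal with Hᵢ ∈ ℝ^{dᵢ×dᵢ} (τᵢ,ε)-conformal and τᵢ − ε > τ_{i+1} + ε for all i < p. Fix 1 ≤ r ≤ p, let t = d₁+⋯+d_r and Γ = Σ_{i=1}^r dᵢτᵢ. Then e₁∧⋯∧e_t is an eigenvector of the t-fold exterior power H^{∧t} whose eigenvalue has modulus at least exp(Γ − tε); moreover for any indices 1 ≤ i₁ < ⋯ < i_t ≤ d with (i₁,…,i_t) ≠ (1,…,t) (and r ≤ p−1), one has |H^{∧t}(e_{i₁}∧⋯∧e_{i_t})| ≤ exp(Γ + τ_{r+1} − τ_r + tε). -/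
open scoped BigOperators

noncomputable def svalList {n : Type*} [Fintype n] [DecidableEq n] (A : Matrix n n ℝ) : List ℝ :=
  ((Multiset.map (fun i => Real.sqrt ((Matrix.isHermitian_conjTranspose_mul_self A).eigenvalues i))
      Finset.univ.val).sort (· ≤ ·)).reverse

/-- `sval A j` is the `(j+1)`-th largest singular value `α_{j+1}(A)` (0-indexed). -/
noncomputable def sval {n : Type*} [Fintype n] [DecidableEq n] (A : Matrix n n ℝ) (j : ℕ) : ℝ :=
  (svalList A).getD j 0

/-- The `t`-th compound matrix: the matrix of the exterior power `A^{∧t}` in the orthonormal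
basis `{e_{i₁}∧⋯∧e_{i_t} : i₁ < ⋯ < i_t}` of `⋀^t ℝ^d` (entries are the `t×t` minors). -/
noncomputable def compound {d : ℕ} (t : ℕ) (A : Matrix (Fin d) (Fin d) ℝ) :
    Matrix {S : Finset (Fin d) // S.card = t} {S : Finset (Fin d) // S.card = t} ℝ :=
  fun S T => (A.submatrix (fun i => ((S.1.orderIsoOfFin S.2) i : Fin d))
    (fun j => ((T.1.orderIsoOfFin T.2) j : Fin d))).det

/-!
Let `M` be the block-diagonal matrix and `I₀ = {1, …, t}`, which is the set of indices of the first
`r` blocks. Every minor `M[S, I₀]` with `S ≠ I₀` has a zero row, so `e_{I₀}` is an eigenvector of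
`M^{∧t}` with eigenvalue `det M[I₀, I₀] = ∏_{i ≤ r} det Hᵢ`, and `|det Hᵢ| ≥ exp (dᵢ (τᵢ - ε))`.

For any `t`-set `I`, Cauchy–Binet gives `‖M^{∧t} e_I‖² = det (M[:, I]ᵀ M[:, I])`, which Hadamard's
inequality bounds by `∏_{k ∈ I} ‖M e_k‖² ≤ ∏_{k ∈ I} exp (2 (τ_{β k} + ε))`, where `β k` is the
block of `k`. If `I ≠ I₀`, trading the elements of `I \ I₀` (blocks after `r`) for those of `I₀ \ I`
(blocks up to `r`) shows `∑_{k ∈ I} τ_{β k} ≤ Γ + τ_{r+1} - τ_r`, because `τ` is decreasing.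
-/

open Matrix Finset Function

theorem Fintype.sum_eq_sum_orderEmbOfFin_comp {t : ℕ} {m M : Type*} [Fintype m] [LinearOrder m]
    [AddCommMonoid M] (G : (Fin t → m) → M) (hG : ∀ p, ¬ Injective p → G p = 0) :
    ∑ p, G p = ∑ S : {S : Finset m // S.card = t}, ∑ q : Fin t → Fin t,
      G (S.1.orderEmbOfFin S.2 ∘ q) := by
  have injective_of_ne_zero {p} (hp : G p ≠ 0) : Injective p := by
    by_contra h; exact hp (hG p h)
  rw [← Fintype.sum_prod_type']
  symm
  refine sum_bij_ne_zero (fun Sq _ _ => Sq.1.1.orderEmbOfFin Sq.1.2 ∘ Sq.2)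
    (fun _ _ _ => mem_univ _) ?_ ?_ (fun _ _ _ => rfl)
  · rintro ⟨S, q⟩ - hq ⟨S', q'⟩ - hq' heq
    have hrange {S : {S : Finset m // S.card = t}} {q : Fin t → Fin t}
        (hq : G (S.1.orderEmbOfFin S.2 ∘ q) ≠ 0) :
        Set.range (S.1.orderEmbOfFin S.2 ∘ q) = S.1 := by
      rw [(Finite.injective_iff_surjective.mp (injective_of_ne_zero hq).of_comp).range_comp,
        range_orderEmbOfFin]
    obtain rfl : S = S' := Subtype.ext <| coe_injective <| by
      rw [← hrange hq, ← hrange hq']; exact congrArg Set.range heq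
    simp only [Prod.mk.injEq, true_and]
    exact funext fun a => (S.1.orderEmbOfFin S.2).injective (congrFun heq a)
  · intro p _ hp
    have hcard : (univ.image p).card = t := by
      rw [card_image_of_injective _ (injective_of_ne_zero hp), card_univ, Fintype.card_fin]
    let S : {S : Finset m // S.card = t} := ⟨univ.image p, hcard⟩
    let q : Fin t → Fin t := fun a => (S.1.orderIsoOfFin S.2).symm ⟨p a, by simp [S]⟩
    have hpq : S.1.orderEmbOfFin S.2 ∘ q = p := funext fun a => by
      rw [Function.comp_apply, ← coe_orderIsoOfFin_apply, OrderIso.apply_symm_apply]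
    exact ⟨(S, q), mem_univ _, hpq ▸ hp, hpq⟩

namespace Matrix

section CauchyBinet

variable {R m n : Type*} [CommRing R] [Fintype m] [Fintype n] [DecidableEq n]

theorem det_mul_eq_sum_det_submatrix_mul_prod (A : Matrix n m R) (B : Matrix m n R) :
    det (A * B) = ∑ p : n → m, det (A.submatrix id p) * ∏ i, B (p i) i := by
  simp only [det_apply', mul_apply, prod_univ_sum, mul_sum, Fintype.piFinset_univ,
    submatrix_apply, id, sum_mul, prod_mul_distrib, mul_assoc]
  exact sum_comm

/-- The Cauchy–Binet formula. -/
theorem det_mul_eq_sum_det_mul_det {t : ℕ} [LinearOrder m] (A : Matrix (Fin t) m R)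
    (B : Matrix m (Fin t) R) :
    det (A * B) = ∑ S : {S : Finset m // S.card = t},
      det (A.submatrix id (S.1.orderEmbOfFin S.2)) *
        det (B.submatrix (S.1.orderEmbOfFin S.2) id) := by
  rw [det_mul_eq_sum_det_submatrix_mul_prod, Fintype.sum_eq_sum_orderEmbOfFin_comp]
  · refine sum_congr rfl fun S _ => ?_
    rw [← det_mul, det_mul_eq_sum_det_submatrix_mul_prod]
    rfl
  · intro p hp
    obtain ⟨i, j, hij, hne⟩ := not_injective_iff.mp hp
    rw [det_zero_of_column_eq hne fun k => by simp [hij], zero_mul]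

theorem det_transpose_mul_self_eq_sum_sq {t : ℕ} [LinearOrder m] (B : Matrix m (Fin t) R) :
    det (Bᵀ * B) = ∑ S : {S : Finset m // S.card = t},
      det (B.submatrix (S.1.orderEmbOfFin S.2) id) ^ 2 := by
  simp only [det_mul_eq_sum_det_mul_det, ← transpose_submatrix, det_transpose, sq]

end CauchyBinet

/-- Hadamard's inequality. -/
theorem det_gram_le_prod_norm_sq {E ι : Type*} [NormedAddCommGroup E]
    [InnerProductSpace ℝ E] [Fintype ι] [DecidableEq ι] (v : ι → E) :
    (gram ℝ v).det ≤ ∏ i, ‖v i‖ ^ 2 := by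
  -- Gram–Schmidt wants a well-ordered index type.
  let σ := (Fintype.equivFin ι).symm
  rw [← det_submatrix_equiv_self σ, ← σ.prod_comp]
  change (gram ℝ (v ∘ σ)).det ≤ ∏ i, ‖(v ∘ σ) i‖ ^ 2
  generalize v ∘ σ = u
  by_cases hu : LinearIndependent ℝ u
  swap
  · rw [not_not.mp (mt det_gram_ne_zero_iff_linearIndependent.mp hu)]
    positivity
  let W := Submodule.span ℝ (Set.range u)
  have : FiniteDimensional ℝ W := FiniteDimensional.span_of_finite ℝ (Set.finite_range u)
  let w : Fin (Fintype.card ι) → W := fun i => ⟨u i, Submodule.subset_span ⟨i, rfl⟩⟩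
  have hgram : gram ℝ u = gram ℝ w := by
    ext i j; simp [gram_apply, w]
  have hdet (b : OrthonormalBasis (Fin (Fintype.card ι)) ℝ W) :
      (gram ℝ w).det = b.toBasis.det w ^ 2 := by
    rw [gram_eq_conjTranspose_mul b, det_mul, det_conjTranspose, Module.Basis.det_apply, sq]
    simp only [star_trivial]
    rfl
  let b := InnerProductSpace.gramSchmidtOrthonormalBasis (finrank_span_eq_card hu) w
  rw [hgram, hdet b, InnerProductSpace.gramSchmidtOrthonormalBasis_det, ← prod_pow]
  refine prod_le_prod (fun _ _ => sq_nonneg _) fun i _ => ?_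
  rw [← sq_abs]
  gcongr
  calc |inner ℝ (b i) (w i)| ≤ ‖b i‖ * ‖w i‖ := abs_real_inner_le_norm _ _
    _ = ‖u i‖ := by simp [b.orthonormal.1 i, w]

theorem det_transpose_mul_self_le_prod_sum_sq {m ι : Type*} [Fintype m] [Fintype ι]
    [DecidableEq ι] (B : Matrix m ι ℝ) :
    (Bᵀ * B).det ≤ ∏ a, ∑ x, B x a ^ 2 := by
  have hgram : gram ℝ (fun a => WithLp.toLp 2 fun x => B x a) = Bᵀ * B := by
    ext a b
    simp [gram_apply, mul_apply, PiLp.inner_apply, mul_comm]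
  simpa [← hgram, EuclideanSpace.norm_sq_eq] using
    det_gram_le_prod_norm_sq (ι := ι) fun a => WithLp.toLp 2 fun x => B x a

section EuclideanSpace

variable {κ : Type*} [Fintype κ] [DecidableEq κ]

theorem toEuclideanCLM_single_eq_smul_of_apply_eq_zero {𝕜 : Type*} [RCLike 𝕜]
    (C : Matrix κ κ 𝕜) {J : κ} (h : ∀ S, S ≠ J → C S J = 0) :
    toEuclideanCLM (𝕜 := 𝕜) C (EuclideanSpace.single J 1) =
      C J J • EuclideanSpace.single J 1 := by
  ext S
  by_cases hS : S = J
  · subst hS; simp [mulVec_single]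
  · simp [mulVec_single, hS, h S hS]

theorem norm_toEuclideanCLM_single (C : Matrix κ κ ℝ) (J : κ) :
    ‖toEuclideanCLM (𝕜 := ℝ) C (EuclideanSpace.single J 1)‖ = √(∑ S, C S J ^ 2) := by
  simp [EuclideanSpace.norm_eq, mulVec_single]

end EuclideanSpace

section BlockDiagonal

variable {ι : Type*} [DecidableEq ι] {m : ι → Type*} {n : Type*} (e : (Σ i, m i) ≃ n)

theorem reindex_blockDiagonal'_apply_eq_zero {R : Type*} [Zero R] (H : ∀ i, Matrix (m i) (m i) R)
    {j k : n} (h : (e.symm j).1 ≠ (e.symm k).1) :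
    reindex e e (blockDiagonal' H) j k = 0 := by
  simp [blockDiagonal'_apply, h]

theorem sum_sq_reindex_blockDiagonal'_apply {R : Type*} [Semiring R] [Fintype ι]
    [∀ i, Fintype (m i)] [Fintype n] (H : ∀ i, Matrix (m i) (m i) R) (k : n) :
    ∑ j, reindex e e (blockDiagonal' H) j k ^ 2 = ∑ x, H (e.symm k).1 x (e.symm k).2 ^ 2 := by
  obtain ⟨⟨i, s⟩, rfl⟩ := e.surjective k
  rw [e.symm_apply_apply, ← e.sum_comp, Fintype.sum_sigma, sum_eq_single i]
  · simp
  · intro j _ hj; simp [blockDiagonal'_apply, hj]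
  · simp

variable {R : Type*} [CommRing R] [Fintype ι] [∀ i, Fintype (m i)] [∀ i, DecidableEq (m i)]
  (H : ∀ i, Matrix (m i) (m i) R)

theorem det_blockDiagonal' : (blockDiagonal' H).det = ∏ i, (H i).det := by
  -- `BlockTriangular.det_fintype` needs an order on the blocks; any one will do.
  let _ : LinearOrder ι := LinearOrder.lift' _ (Fintype.equivFin ι).injective
  convert (blockTriangular_blockDiagonal' H).det_fintype using 2 with i
  rw [← det_submatrix_equiv_self (Equiv.sigmaSubtype i) (H i)]
  congr 1
  ext ⟨⟨j, x⟩, hj⟩ ⟨⟨k, y⟩, hk⟩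
  dsimp only at hj hk
  subst hj hk
  simp [toSquareBlock_def, Equiv.sigmaSubtype]

theorem det_blockDiagonal'_submatrix_subtype (F : Finset ι) :
    ((blockDiagonal' H).submatrix (Subtype.val : {a : Σ i, m i // a.1 ∈ F} → _)
      Subtype.val).det = ∏ i ∈ F, (H i).det := by
  have : (blockDiagonal' H).submatrix (Subtype.val : {a : Σ i, m i // a.1 ∈ F} → _)
      Subtype.val = (blockDiagonal' fun i : F => H i).submatrix
        (Equiv.subtypeSigmaEquiv m (· ∈ F)) (Equiv.subtypeSigmaEquiv m (· ∈ F)) := by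
    ext ⟨⟨i, x⟩, hi⟩ ⟨⟨j, y⟩, hj⟩
    by_cases hij : i = j
    · subst hij; simp [Equiv.subtypeSigmaEquiv]
    · simp [Equiv.subtypeSigmaEquiv, blockDiagonal'_apply, hij]
  rw [this, det_submatrix_equiv_self, det_blockDiagonal', prod_coe_sort F fun i => (H i).det]

theorem det_reindex_blockDiagonal'_submatrix [DecidableEq n] {F : Finset ι} {s : Finset n}
    (hs : ∀ j, j ∈ s ↔ (e.symm j).1 ∈ F) :
    ((reindex e e (blockDiagonal' H)).submatrix (Subtype.val : s → n) Subtype.val).det =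
      ∏ i ∈ F, (H i).det := by
  rw [← det_blockDiagonal'_submatrix_subtype H F,
    ← det_submatrix_equiv_self (e.symm.subtypeEquiv hs)]
  rfl

end BlockDiagonal

end Matrix

section SingularValues

variable {n : Type*} [Fintype n] [DecidableEq n]

theorem exists_lt_card_sval_eq (A : Matrix n n ℝ) (i : n) :
    ∃ j < Fintype.card n, sval A j = √((isHermitian_conjTranspose_mul_self A).eigenvalues i) := by
  have hmem : √((isHermitian_conjTranspose_mul_self A).eigenvalues i) ∈ svalList A := by
    simp [svalList]
  obtain ⟨j, hj, hget⟩ := List.mem_iff_getElem.mp hmem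
  have hlen : (svalList A).length = Fintype.card n := by simp [svalList]
  exact ⟨j, hlen ▸ hj, by rw [sval, List.getD_eq_getElem _ _ hj, hget]⟩

theorem abs_det_eq_prod_sqrt_eigenvalues (A : Matrix n n ℝ) :
    |A.det| = ∏ i, √((isHermitian_conjTranspose_mul_self A).eigenvalues i) := by
  have hdet : (Aᴴ * A).det = ∏ i, (isHermitian_conjTranspose_mul_self A).eigenvalues i := by
    simpa using (isHermitian_conjTranspose_mul_self A).det_eq_prod_eigenvalues
  rw [← Real.sqrt_prod _ fun i _ => eigenvalues_conjTranspose_mul_self_nonneg A i, ← hdet]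
  simp [det_mul, Real.sqrt_mul_self_eq_abs]

theorem pow_card_le_abs_det_of_le_sval (A : Matrix n n ℝ) {c : ℝ} (hc0 : 0 ≤ c)
    (hc : ∀ j < Fintype.card n, c ≤ sval A j) : c ^ Fintype.card n ≤ |A.det| := by
  rw [abs_det_eq_prod_sqrt_eigenvalues, ← card_univ, ← prod_const]
  refine prod_le_prod (fun _ _ => hc0) fun i _ => ?_
  obtain ⟨j, hj, hsv⟩ := exists_lt_card_sval_eq A i
  exact hsv ▸ hc j hj

open MatrixOrder in
theorem sqrt_sum_sq_le_of_sval_le (A : Matrix n n ℝ) {c : ℝ} (hc0 : 0 ≤ c)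
    (hc : ∀ j < Fintype.card n, sval A j ≤ c) (s : n) : √(∑ x, A x s ^ 2) ≤ c := by
  have hA := isHermitian_conjTranspose_mul_self A
  have heig : ∀ i, hA.eigenvalues i ≤ c ^ 2 := fun i => by
    obtain ⟨j, hj, hsv⟩ := exists_lt_card_sval_eq A i
    rw [← Real.sqrt_le_left hc0]
    exact hsv ▸ hc j hj
  have hle : Aᴴ * A ≤ algebraMap ℝ _ (c ^ 2) := by
    rw [le_algebraMap_iff_spectrum_le hA.isSelfAdjoint, hA.spectrum_real_eq_range_eigenvalues]
    simpa using heig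
  have hdiag := (Matrix.le_iff.mp hle).diag_nonneg (i := s)
  rw [Matrix.sub_apply, algebraMap_matrix_apply, if_pos rfl, mul_apply, sub_nonneg] at hdiag
  rw [Real.sqrt_le_left hc0]
  simpa [← sq] using hdiag

end SingularValues

section Compound

variable {N t : ℕ}

theorem compound_apply_self (A : Matrix (Fin N) (Fin N) ℝ)
    (S : {S : Finset (Fin N) // S.card = t}) :
    compound t A S S = (A.submatrix (Subtype.val : S.1 → Fin N) Subtype.val).det :=
  det_submatrix_equiv_self (S.1.orderIsoOfFin S.2).toEquiv (A.submatrix Subtype.val Subtype.val)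

theorem compound_eq_zero_of_row_eq_zero (A : Matrix (Fin N) (Fin N) ℝ)
    {S T : {S : Finset (Fin N) // S.card = t}} {x : Fin N} (hx : x ∈ S.1)
    (h : ∀ y ∈ T.1, A x y = 0) : compound t A S T = 0 := by
  obtain ⟨a, rfl⟩ : x ∈ Set.range (S.1.orderEmbOfFin S.2) := by simpa using hx
  exact det_eq_zero_of_row_eq_zero a fun b => h _ (orderEmbOfFin_mem _ T.2 _)

theorem norm_toEuclideanCLM_compound_single_le (A : Matrix (Fin N) (Fin N) ℝ)
    (I : {S : Finset (Fin N) // S.card = t}) :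
    ‖toEuclideanCLM (𝕜 := ℝ) (compound t A) (EuclideanSpace.single I 1)‖ ≤
      ∏ k ∈ I.1, √(∑ j, A j k ^ 2) := by
  set B := A.submatrix id (I.1.orderEmbOfFin I.2)
  have hsum : ∑ S, compound t A S I ^ 2 = (Bᵀ * B).det := by
    rw [det_transpose_mul_self_eq_sum_sq]; rfl
  rw [norm_toEuclideanCLM_single, hsum, ← I.1.map_orderEmbOfFin_univ I.2, prod_map,
    ← Real.sqrt_prod _ fun _ _ => by positivity]
  exact Real.sqrt_le_sqrt (det_transpose_mul_self_le_prod_sum_sq B)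

variable {ι : Type*} [Fintype ι] [DecidableEq ι] {m : ι → Type*} [∀ i, Fintype (m i)]
  (H : ∀ i, Matrix (m i) (m i) ℝ) (e : (Σ i, m i) ≃ Fin N)

theorem toEuclideanCLM_compound_reindex_blockDiagonal'_single [∀ i, DecidableEq (m i)]
    {F : Finset ι}
    {I : {S : Finset (Fin N) // S.card = t}} (hI : ∀ j, j ∈ I.1 ↔ (e.symm j).1 ∈ F) :
    toEuclideanCLM (𝕜 := ℝ) (compound t (reindex e e (blockDiagonal' H)))
        (EuclideanSpace.single I 1) =
      (∏ i ∈ F, (H i).det) • EuclideanSpace.single I 1 := by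
  rw [← det_reindex_blockDiagonal'_submatrix e H hI, ← compound_apply_self]
  refine toEuclideanCLM_single_eq_smul_of_apply_eq_zero _ fun S hS => ?_
  obtain ⟨x, hxS, hxI⟩ := not_subset.mp fun h =>
    hS (Subtype.ext (eq_of_subset_of_card_le h (by rw [S.2, I.2])))
  refine compound_eq_zero_of_row_eq_zero _ hxS fun y hy =>
    reindex_blockDiagonal'_apply_eq_zero e H fun h => ?_
  rw [hI] at hxI hy
  exact hxI (h ▸ hy)

theorem norm_toEuclideanCLM_compound_reindex_blockDiagonal'_single_le {c : ι → ℝ}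
    (hc : ∀ i s, √(∑ x, H i x s ^ 2) ≤ c i) (I : {S : Finset (Fin N) // S.card = t}) :
    ‖toEuclideanCLM (𝕜 := ℝ) (compound t (reindex e e (blockDiagonal' H)))
        (EuclideanSpace.single I 1)‖ ≤ ∏ k ∈ I.1, c (e.symm k).1 :=
  (norm_toEuclideanCLM_compound_single_le _ I).trans <|
    prod_le_prod (fun _ _ => Real.sqrt_nonneg _) fun k _ => by
      rw [sum_sq_reindex_blockDiagonal'_apply]; exact hc _ _

end Compound

section Ordering

theorem Fin.mem_iff_lt_card_of_isLowerSet {N : ℕ} {s : Finset (Fin N)}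
    (hs : IsLowerSet (s : Set (Fin N))) (j : Fin N) : j ∈ s ↔ (j : ℕ) < s.card := by
  constructor
  · intro hj
    have := card_le_card fun k hk => hs (mem_Iic.mp hk) hj
    rw [Fin.card_Iic] at this
    omega
  · intro hj
    by_contra hjs
    have := card_le_card fun k hk => mem_Iio.mpr (lt_of_not_ge fun hjk => hjs (hs hjk hk))
    rw [Fin.card_Iio] at this
    omega

theorem Fin.antitone_of_succ_le {α : Type*} [Preorder α] {p : ℕ} {f : Fin p → α}
    (h : ∀ (i : Fin p) (hi : (i : ℕ) + 1 < p), f ⟨i + 1, hi⟩ ≤ f i) : Antitone f := by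
  rintro ⟨a, ha⟩ ⟨b, hb⟩ (hab : a ≤ b)
  induction b, hab using Nat.le_induction with
  | base => rfl
  | succ b _ ih => exact (h ⟨b, by omega⟩ hb).trans (ih (by omega))

theorem Finset.sum_le_sum_add_sub_of_card_eq {α : Type*} [DecidableEq α] {T L : Finset α}
    (w : α → ℝ) {a b : ℝ} (hba : b ≤ a) (hL : ∀ x ∈ L, a ≤ w x) (hLc : ∀ x ∉ L, w x ≤ b)
    (hcard : T.card = L.card) (hTL : T ≠ L) :
    ∑ x ∈ T, w x ≤ ∑ x ∈ L, w x + b - a := by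
  set k := (T \ L).card
  have hk : (L \ T).card = k := by
    have := card_sdiff_add_card_inter T L
    have := card_sdiff_add_card_inter L T
    rw [inter_comm] at this
    omega
  have hk1 : (1 : ℝ) ≤ k := by
    rw [Nat.one_le_cast, Nat.one_le_iff_ne_zero, Ne, card_eq_zero, sdiff_eq_empty_iff_subset]
    exact fun hsub => hTL (eq_of_subset_of_card_le hsub hcard.ge)
  have hout : ∑ x ∈ T \ L, w x ≤ k * b := by
    simpa using sum_le_sum fun x hx => hLc x (mem_sdiff.mp hx).2
  have hin : k * a ≤ ∑ x ∈ L \ T, w x := by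
    rw [← hk]
    simpa using sum_le_sum fun x hx => hL x (mem_sdiff.mp hx).1
  calc ∑ x ∈ T, w x = ∑ x ∈ L ∩ T, w x + ∑ x ∈ T \ L, w x := by
        rw [inter_comm, sum_inter_add_sum_sdiff]
    _ ≤ ∑ x ∈ L, w x - k * (a - b) := by
        rw [← sum_inter_add_sum_sdiff L T]; linarith
    _ ≤ ∑ x ∈ L, w x + b - a := by nlinarith

variable {ι n M : Type*} [Fintype ι] {m : ι → Type*} [∀ i, Fintype (m i)] [Fintype n]

theorem Equiv.sum_filter_fst_symm [AddCommMonoid M] (e : (Σ i, m i) ≃ n) (P : ι → Prop)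
    [DecidablePred P] (f : ι → M) :
    ∑ j with P (e.symm j).1, f (e.symm j).1 = ∑ i with P i, Fintype.card (m i) • f i := by
  rw [sum_filter, ← e.sum_comp, Fintype.sum_sigma, sum_filter]
  simp

theorem Equiv.card_filter_fst_symm (e : (Σ i, m i) ≃ n) (P : ι → Prop) [DecidablePred P] :
    #{j | P (e.symm j).1} = ∑ i with P i, Fintype.card (m i) := by
  rw [card_eq_sum_ones, e.sum_filter_fst_symm P fun _ => 1]
  simp

theorem Equiv.fst_symm_le_iff_lt_sum [LinearOrder ι] {N : ℕ} (e : (Σ i, m i) ≃ Fin N)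
    (he : ∀ a b, a.1 < b.1 → e a ≤ e b) (r : ι) (j : Fin N) :
    (e.symm j).1 ≤ r ↔ (j : ℕ) < ∑ i with i ≤ r, Fintype.card (m i) := by
  have hlower : IsLowerSet (({k | (e.symm k).1 ≤ r} : Finset (Fin N)) : Set (Fin N)) := by
    intro k l hlk hk
    simp only [coe_filter, mem_univ, true_and, Set.mem_ofPred_eq] at hk ⊢
    by_contra hl
    have hkl : k ≤ l := by simpa using he (e.symm k) (e.symm l) (hk.trans_lt (not_le.mp hl))
    exact hl (le_antisymm hlk hkl ▸ hk)
  rw [← e.card_filter_fst_symm]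
  simpa using Fin.mem_iff_lt_card_of_isLowerSet hlower j

end Ordering

/-- Let `H = H₁ ⊕ ⋯ ⊕ H_p` be block-diagonal (realized on `Fin (Σdᵢ)` via an
order-preserving identification `e`), with `Hᵢ` `(τᵢ,ε)`-conformal and `τᵢ − ε > τ_{i+1} + ε`.
For `t = d₁+⋯+d_r` and `Γ = Σ_{i≤r} dᵢτᵢ`, the wedge `e₁∧⋯∧e_t` (the basis vector of
`⋀^t ℝ^d` indexed by `{0,…,t−1}`) is an eigenvector of `H^{∧t}` with eigenvalue of modulus at
least `exp(Γ − tε)`; and for any other basis vector `e_{i₁}∧⋯∧e_{i_t}` (when `r ≤ p−1`),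
`|H^{∧t}(e_{i₁}∧⋯∧e_{i_t})| ≤ exp(Γ + τ_{r+1} − τ_r + tε)`. -/
theorem wedge_blockDiagonal_eigen {p : ℕ} (d : Fin p → ℕ)
    (H : (i : Fin p) → Matrix (Fin (d i)) (Fin (d i)) ℝ) (τ : Fin p → ℝ) (ε : ℝ) (hε : 0 ≤ ε)
    (hconf : ∀ i : Fin p, ∀ j : ℕ, j < d i →
      sval (H i) j ∈ Set.Icc (Real.exp (τ i - ε)) (Real.exp (τ i + ε)))
    (hgap : ∀ i : Fin p, ∀ h : (i : ℕ) + 1 < p, τ ⟨(i : ℕ) + 1, h⟩ + ε < τ i - ε)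
    (e : (Σ i : Fin p, Fin (d i)) ≃ Fin (∑ i, d i))
    (he : ∀ a b : Σ i : Fin p, Fin (d i),
      (a.1 < b.1 ∨ (a.1 = b.1 ∧ (a.2 : ℕ) ≤ (b.2 : ℕ))) → e a ≤ e b)
    (r : Fin p)
    (t : ℕ) (ht : t = ∑ i ∈ Finset.univ.filter (fun i => i ≤ r), d i)
    (Γ : ℝ) (hΓ : Γ = ∑ i ∈ Finset.univ.filter (fun i => i ≤ r), (d i : ℝ) * τ i) :
    (∀ I : {S : Finset (Fin (∑ i, d i)) // S.card = t},
      I.1 = Finset.univ.filter (fun j : Fin (∑ i, d i) => (j : ℕ) < t) →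
      ∃ μ : ℝ, Real.exp (Γ - t * ε) ≤ |μ| ∧
        Matrix.toEuclideanCLM (𝕜 := ℝ)
            (compound t ((Matrix.reindex e e) (Matrix.blockDiagonal' H)))
            (EuclideanSpace.single I 1) = μ • EuclideanSpace.single I 1) ∧
    (∀ hr : (r : ℕ) + 1 < p, ∀ I : {S : Finset (Fin (∑ i, d i)) // S.card = t},
      I.1 ≠ Finset.univ.filter (fun j : Fin (∑ i, d i) => (j : ℕ) < t) →
      ‖Matrix.toEuclideanCLM (𝕜 := ℝ)
          (compound t ((Matrix.reindex e e) (Matrix.blockDiagonal' H)))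
          (EuclideanSpace.single I 1)‖ ≤
        Real.exp (Γ + τ ⟨(r : ℕ) + 1, hr⟩ - τ r + t * ε)) := by
  have hfirst : (univ.filter fun j : Fin (∑ i, d i) => (j : ℕ) < t) =
      univ.filter fun j => (e.symm j).1 ≤ r := by
    ext j
    simpa [ht] using (e.fst_symm_le_iff_lt_sum (fun a b h => he a b (Or.inl h)) r j).symm
  have hτ : Antitone τ := Fin.antitone_of_succ_le fun i hi => by linarith [hgap i hi]
  have hdet (i : Fin p) : Real.exp (d i * (τ i - ε)) ≤ |(H i).det| := by
    simpa [Real.exp_nat_mul] using pow_card_le_abs_det_of_le_sval (H i) (Real.exp_pos _).le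
      fun j hj => (hconf i j (by simpa using hj)).1
  have hcol (i : Fin p) (s : Fin (d i)) : √(∑ x, H i x s ^ 2) ≤ Real.exp (τ i + ε) :=
    sqrt_sum_sq_le_of_sval_le (H i) (Real.exp_pos _).le
      (fun j hj => (hconf i j (by simpa using hj)).2) s
  refine ⟨fun I hI => ⟨_, ?_, toEuclideanCLM_compound_reindex_blockDiagonal'_single H e
    (F := univ.filter (· ≤ r)) fun j => by simp [hI, hfirst]⟩, fun hr I hI => ?_⟩
  · rw [abs_prod, show Γ - t * ε = ∑ i with i ≤ r, (d i : ℝ) * (τ i - ε) by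
      simp only [hΓ, ht, Nat.cast_sum, sum_mul, ← sum_sub_distrib, mul_sub], Real.exp_sum]
    exact prod_le_prod (fun _ _ => by positivity) fun i _ => hdet i
  · have hexchange := sum_le_sum_add_sub_of_card_eq (fun k => τ (e.symm k).1)
      (hτ (Fin.mk_le_mk.mpr (by omega) : r ≤ ⟨r + 1, hr⟩)) (fun k hk => hτ (mem_filter.mp hk).2)
      (fun k hk => hτ (Fin.le_def.mpr (by simpa using hk : r < (e.symm k).1)))
      (by rw [I.2, e.card_filter_fst_symm (· ≤ r)]; simp [ht]) (hfirst ▸ hI)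
    rw [e.sum_filter_fst_symm (· ≤ r)] at hexchange
    calc _ ≤ ∏ k ∈ I.1, Real.exp (τ (e.symm k).1 + ε) :=
          norm_toEuclideanCLM_compound_reindex_blockDiagonal'_single_le H e hcol I
      _ = Real.exp (∑ k ∈ I.1, τ (e.symm k).1 + t * ε) := by
          rw [← Real.exp_sum, sum_add_distrib, sum_const, I.2, nsmul_eq_mul]
      _ ≤ _ := by
          gcongr
          simp only [Fintype.card_fin, nsmul_eq_mul] at hexchange
          linarith
end

section
/- Let V be a finite-dimensional inner product space, A : V → V linear, v ∈ V nonzero, and λ > 0, with Av = λv and ‖A restricted to v^⊥‖ < λ/18. Then A maps the cone 𝒞(v,1/2) into 𝒞(v,1/5), where 𝒞(v,r) = { w ∈ V : (v|w) ≥ (1−r)|v||w| }. -/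
/-!
Split `w = c • v + u` with `c = ⟪v, w⟫ / ‖v‖²` and `u ⊥ v`. Then `A w = (c λ) • v + A u` and
`‖A u‖ ≤ ‖A|_{v^⊥}‖ ‖u‖ < (λ / 18) ‖w‖ ≤ (λ / 18) · 2 c ‖v‖`, since `w ∈ 𝒞(v, 1/2)` forces
`‖w‖ ≤ 2 c ‖v‖`. So `A w` lies within relative distance `1/9` of the ray through `v`, and a vector
`a • v + z` with `‖z‖ ≤ δ a ‖v‖` lies in `𝒞(v, r)` as soon as `(1 - r)(1 + δ) ≤ 1 - δ`, which for
`δ = 1/9`, `r = 1/5` is an equality.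
-/

open scoped RealInnerProductSpace

/-- The `r`-cone around a nonzero vector `v`:
`𝒞(v,r) = { w : (v|w) ≥ (1−r)|v||w| }`. -/
def rCone {V : Type*} [NormedAddCommGroup V] [InnerProductSpace ℝ V] (v : V) (r : ℝ) : Set V :=
  {w | (1 - r) * ‖v‖ * ‖w‖ ≤ ⟪v, w⟫}

theorem ContinuousLinearMap.norm_apply_le_norm_comp_subtypeL_mul {𝕜 E F : Type*}
    [NontriviallyNormedField 𝕜] [SeminormedAddCommGroup E] [NormedSpace 𝕜 E]
    [SeminormedAddCommGroup F] [NormedSpace 𝕜 F] (A : E →L[𝕜] F) {K : Submodule 𝕜 E} {u : E}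
    (hu : u ∈ K) : ‖A u‖ ≤ ‖A.comp K.subtypeL‖ * ‖u‖ :=
  (A.comp K.subtypeL).le_opNorm ⟨u, hu⟩

section rCone

variable {V : Type*} [NormedAddCommGroup V] [InnerProductSpace ℝ V] {v w x : V} {a δ r : ℝ}

theorem mem_rCone_of_norm_sub_smul_le (ha : 0 ≤ a) (hx : ‖x - a • v‖ ≤ δ * (a * ‖v‖))
    (hr : r ≤ 1) (hδ : (1 - r) * (1 + δ) ≤ 1 - δ) : x ∈ rCone v r := by
  have hinner : a * ‖v‖ ^ 2 - ‖v‖ * ‖x - a • v‖ ≤ ⟪v, x⟫ := by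
    have h := neg_le_of_abs_le (abs_real_inner_le_norm v (x - a • v))
    rw [inner_sub_right, real_inner_smul_right, real_inner_self_eq_norm_sq] at h
    linarith
  have hnorm : ‖x‖ ≤ a * ‖v‖ + ‖x - a • v‖ := by
    simpa [norm_smul, abs_of_nonneg ha, add_comm] using norm_le_norm_add_norm_sub' x (a • v)
  show (1 - r) * ‖v‖ * ‖x‖ ≤ ⟪v, x⟫
  have hv := norm_nonneg v
  calc (1 - r) * ‖v‖ * ‖x‖ ≤ (1 - r) * ‖v‖ * (a * ‖v‖ + δ * (a * ‖v‖)) :=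
        mul_le_mul_of_nonneg_left (by linarith) (mul_nonneg (by linarith) hv)
    _ = (1 - r) * (1 + δ) * (a * ‖v‖ ^ 2) := by ring
    _ ≤ (1 - δ) * (a * ‖v‖ ^ 2) := by gcongr
    _ ≤ a * ‖v‖ ^ 2 - ‖v‖ * ‖x - a • v‖ := by
        nlinarith [mul_le_mul_of_nonneg_left hx hv]
    _ ≤ ⟪v, x⟫ := hinner

theorem mul_norm_le_of_mem_rCone (hv : v ≠ 0) (hw : w ∈ rCone v r) :
    (1 - r) * ‖w‖ ≤ ⟪v, w⟫ / ‖v‖ ^ 2 * ‖v‖ := by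
  have hv' : 0 < ‖v‖ := norm_pos_iff.2 hv
  rw [sq, div_mul_eq_mul_div, mul_div_mul_right _ _ hv'.ne', le_div_iff₀ hv']
  linarith [show (1 - r) * ‖v‖ * ‖w‖ ≤ ⟪v, w⟫ from hw]

end rCone

theorem cone_condition_of_dominant_eigenvector_general
    {V : Type*} [NormedAddCommGroup V] [InnerProductSpace ℝ V]
    (A : V →L[ℝ] V) (v : V) (lam : ℝ) (hlam : 0 < lam)
    (heig : A v = lam • v)
    (hperp : ‖A.comp (Submodule.subtypeL (ℝ ∙ v)ᗮ)‖ < lam / 18) :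
    Set.MapsTo A (rCone v (1/2)) (rCone v (1/5)) := by
  rcases eq_or_ne v 0 with rfl | hv
  · intro w _
    simp [rCone]
  intro w hw
  set c := ⟪v, w⟫ / ‖v‖ ^ 2
  set u := (ℝ ∙ v)ᗮ.starProjection w with hu
  have hcw : ‖w‖ ≤ 2 * (c * ‖v‖) := by linarith [mul_norm_le_of_mem_rCone hv hw]
  have hc : 0 ≤ c :=
    nonneg_of_mul_nonneg_left (by linarith [norm_nonneg w]) (norm_pos_iff.2 hv)
  have hAw : A w - (c * lam) • v = A u := by
    rw [hu, Submodule.starProjection_orthogonal_val, Submodule.starProjection_singleton,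
      map_sub, map_smul, heig, smul_smul]
    rfl
  refine mem_rCone_of_norm_sub_smul_le (a := c * lam) (δ := 1 / 9) (by positivity) ?_
    (by norm_num) (by norm_num)
  calc ‖A w - (c * lam) • v‖ = ‖A u‖ := by rw [hAw]
    _ ≤ ‖A.comp (ℝ ∙ v)ᗮ.subtypeL‖ * ‖u‖ :=
        A.norm_apply_le_norm_comp_subtypeL_mul ((ℝ ∙ v)ᗮ.starProjection_apply_mem w)
    _ ≤ lam / 18 * ‖w‖ := mul_le_mul hperp.le ((ℝ ∙ v)ᗮ.norm_starProjection_apply_le w)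
        (norm_nonneg _) (by positivity)
    _ ≤ lam / 18 * (2 * (c * ‖v‖)) := by gcongr
    _ = 1 / 9 * (c * lam * ‖v‖) := by ring

/-- If `Av = λv` with `λ > 0` and the norm of the restriction of `A` to `v^⊥`
is `< λ/18`, then `A` maps `𝒞(v,1/2)` into `𝒞(v,1/5)`. -/
theorem cone_condition_of_dominant_eigenvector
    {V : Type*} [NormedAddCommGroup V] [InnerProductSpace ℝ V] [FiniteDimensional ℝ V]
    (A : V →L[ℝ] V) (v : V) (hv : v ≠ 0) (lam : ℝ) (hlam : 0 < lam)
    (heig : A v = lam • v)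
    (hperp : ‖A.comp (Submodule.subtypeL (ℝ ∙ v)ᗮ)‖ < lam / 18) :
    Set.MapsTo A (rCone v (1/2)) (rCone v (1/5)) :=
  cone_condition_of_dominant_eigenvector_general A v lam hlam heig hperp
end
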